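/- arXiv:2208.08714 — 2 statements merged into one kernel-verified Lean document; each statement's English description precedes it below -/
import Mathlib

section
/- Suppose S : ℝ^p → ℝ is a quadratic function S(β) = aᵀβ + (1/2)βᵀAβ + c with A symmetric positive semidefinite, and R : ℝ^p → ℝ is convex. If d minimizes e ↦ (∇S(β))ᵀe + (1/2)eᵀAe + R(β + e), then Q(β + d) ≤ Q(β), where Q = S + R; i.e., the full step of size one is a descent step. -/
open Matrix

/-- For a quadratic `S(β) = aᵀβ + (1/2)βᵀAβ + c` with `A` symmetric positive
semidefinite, and convex `R`, if `d` minimizes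
`e ↦ (∇S(β))ᵀe + (1/2)eᵀAe + R(β+e)`, then `Q(β+d) ≤ Q(β)` for `Q = S + R`. -/
theorem full_step_descent {p : ℕ} (a : Fin p → ℝ) (A : Matrix (Fin p) (Fin p) ℝ)
    (c : ℝ) (hA : A.IsSymm) (hpsd : A.PosSemidef)
    (R : (Fin p → ℝ) → ℝ) (hR : ConvexOn ℝ Set.univ R)
    (β d : Fin p → ℝ)
    (hmin : ∀ e : Fin p → ℝ,
      (a + A.mulVec β) ⬝ᵥ d + (1 / 2) * (d ⬝ᵥ A.mulVec d) + R (β + d) ≤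
        (a + A.mulVec β) ⬝ᵥ e + (1 / 2) * (e ⬝ᵥ A.mulVec e) + R (β + e)) :
    (a ⬝ᵥ (β + d) + (1 / 2) * ((β + d) ⬝ᵥ A.mulVec (β + d)) + c) + R (β + d) ≤
      (a ⬝ᵥ β + (1 / 2) * (β ⬝ᵥ A.mulVec β) + c) + R β := by
  have h0 := hmin 0
  simp at h0
  have hsym : β ⬝ᵥ A.mulVec d = d ⬝ᵥ A.mulVec β := by
    rw [dotProduct_mulVec, ← mulVec_transpose, hA.eq, dotProduct_comm]
  have hexp : a ⬝ᵥ (β + d) + (1 / 2) * ((β + d) ⬝ᵥ A.mulVec (β + d)) + c =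
      (a ⬝ᵥ β + (1 / 2) * (β ⬝ᵥ A.mulVec β) + c) +
      ((a + A.mulVec β) ⬝ᵥ d + (1 / 2) * (d ⬝ᵥ A.mulVec d)) := by
    simp [dotProduct_add, add_dotProduct, mulVec_add, hsym, dotProduct_comm (A.mulVec β) d]
    ring
  have h1 : (a + A.mulVec β) ⬝ᵥ d = a ⬝ᵥ d + A.mulVec β ⬝ᵥ d := add_dotProduct ..
  rw [hexp]
  linarith [h1]
end

section
/- Let S : ℝ^p → ℝ be differentiable at β, R : ℝ^p → ℝ convex, d ∈ ℝ^p a direction, H positive semidefinite, 0 ≤ κ < 1, and define Δ = (∇S(β))ᵀd + κ dᵀHd + R(β + d) - R(β). If Δ < 0, then for every 0 < ζ < 1 there exists ᾱ > 0 such that for all α ∈ (0, ᾱ], Q(β + αd) ≤ Q(β) + α ζ Δ; in particular the Armijo rule backtracking terminates in finitely many steps. -/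
open Matrix Filter Topology

/-! The regularizer is convex, so along the segment it lies below its chord:
`R(β + αd) - R(β) ≤ α (R(β + d) - R(β))` for `α ∈ [0, 1]`. The smooth part satisfies
`S(β + αd) - S(β) = α ∇S(β)ᵀd + o(α)`. Hence `Q(β + αd) - Q(β) ≤ α m` for small `α > 0` as soon as
`m > ∇S(β)ᵀd + R(β + d) - R(β)`, and `m = ζΔ` qualifies because `κ dᵀHd ≥ 0` and `ζΔ > Δ`. -/

section

variable {E : Type*}

theorem ConvexOn.le_add_smul_sub [AddCommGroup E] [Module ℝ E] {R : E → ℝ}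
    (hR : ConvexOn ℝ Set.univ R) (x d : E) {α : ℝ} (hα0 : 0 ≤ α) (hα1 : α ≤ 1) :
    R (x + α • d) ≤ R x + α * (R (x + d) - R x) := by
  have hchord := hR.2 (Set.mem_univ x) (Set.mem_univ (x + d)) (sub_nonneg.2 hα1) hα0
    (sub_add_cancel 1 α)
  have hpoint : (1 - α) • x + α • (x + d) = x + α • d := by module
  rw [hpoint, smul_eq_mul, smul_eq_mul] at hchord
  linarith

variable [NormedAddCommGroup E] [NormedSpace ℝ E]

theorem DifferentiableAt.eventually_le_add_mul_of_fderiv_lt {S : E → ℝ} {x : E}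
    (hS : DifferentiableAt ℝ S x) (d : E) {m : ℝ} (hm : fderiv ℝ S x d < m) :
    ∀ᶠ α in 𝓝[>] 0, S (x + α • d) ≤ S x + α * m := by
  have hline : HasDerivAt (fun t : ℝ => S (x + t • d)) (fderiv ℝ S x d) 0 := by
    have hpath : HasDerivAt (fun t : ℝ => x + t • d) d 0 := by
      simpa using ((hasDerivAt_id (0 : ℝ)).smul_const d).const_add x
    exact (by simpa using hS.hasFDerivAt : HasFDerivAt S (fderiv ℝ S x) (x + (0 : ℝ) • d))
      |>.comp_hasDerivAt 0 hpath
  have hslope := hline.tendsto_slope_zero_right.eventually_lt_const hm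
  filter_upwards [hslope, self_mem_nhdsWithin] with α hα (hα0 : 0 < α)
  simp only [zero_add, zero_smul, add_zero, smul_eq_mul] at hα
  rw [inv_mul_lt_iff₀ hα0] at hα
  linarith

theorem armijo_eventually {S R : E → ℝ} {x : E} (hS : DifferentiableAt ℝ S x)
    (hR : ConvexOn ℝ Set.univ R) (d : E) {m : ℝ}
    (hm : fderiv ℝ S x d + (R (x + d) - R x) < m) :
    ∀ᶠ α in 𝓝[>] 0, S (x + α • d) + R (x + α • d) ≤ S x + R x + α * m := by
  filter_upwards [hS.eventually_le_add_mul_of_fderiv_lt d (lt_sub_iff_add_lt.2 hm),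
    Ioo_mem_nhdsGT (zero_lt_one' ℝ)] with α hSα hα
  have hRα := hR.le_add_smul_sub x d hα.1.le hα.2.le
  linarith

end

theorem armijo_terminates_general {p : ℕ} (S R : (Fin p → ℝ) → ℝ)
    (β d : Fin p → ℝ) (H : Matrix (Fin p) (Fin p) ℝ) (κ : ℝ)
    (hS : DifferentiableAt ℝ S β) (hR : ConvexOn ℝ Set.univ R)
    (hH : H.PosSemidef) (hκ0 : 0 ≤ κ)
    (hΔ : fderiv ℝ S β d + κ * (d ⬝ᵥ H.mulVec d) + R (β + d) - R β < 0) :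
    ∀ ζ : ℝ, 0 < ζ → ζ < 1 →
      ∃ ᾱ > (0 : ℝ), ∀ α : ℝ, 0 < α → α ≤ ᾱ →
        S (β + α • d) + R (β + α • d) ≤
          S β + R β +
            α * ζ * (fderiv ℝ S β d + κ * (d ⬝ᵥ H.mulVec d) + R (β + d) - R β) := by
  intro ζ _ hζ1
  have hquad : 0 ≤ κ * (d ⬝ᵥ H.mulVec d) := mul_nonneg hκ0 (hH.dotProduct_mulVec_nonneg d)
  have hm : fderiv ℝ S β d + (R (β + d) - R β) <
      ζ * (fderiv ℝ S β d + κ * (d ⬝ᵥ H.mulVec d) + R (β + d) - R β) := by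
    nlinarith
  obtain ⟨ᾱ, hᾱ, hIoc⟩ := mem_nhdsGT_iff_exists_Ioc_subset.1 (armijo_eventually hS hR d hm)
  exact ⟨ᾱ, hᾱ, fun α hα0 hαᾱ => by simpa only [Set.mem_ofPred_eq, mul_assoc] using hIoc ⟨hα0, hαᾱ⟩⟩

/-- Armijo backtracking terminates: if
`Δ = (∇S(β))ᵀd + κ dᵀHd + R(β+d) - R(β) < 0`, then for every `ζ ∈ (0,1)` there
is `ᾱ > 0` such that `Q(β + αd) ≤ Q(β) + αζΔ` for all `α ∈ (0, ᾱ]`. -/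
theorem armijo_terminates {p : ℕ} (S R : (Fin p → ℝ) → ℝ)
    (β d : Fin p → ℝ) (H : Matrix (Fin p) (Fin p) ℝ) (κ : ℝ)
    (hS : DifferentiableAt ℝ S β) (hR : ConvexOn ℝ Set.univ R)
    (hH : H.PosSemidef) (hκ0 : 0 ≤ κ) (hκ1 : κ < 1)
    (hΔ : fderiv ℝ S β d + κ * (d ⬝ᵥ H.mulVec d) + R (β + d) - R β < 0) :
    ∀ ζ : ℝ, 0 < ζ → ζ < 1 →
      ∃ ᾱ > (0 : ℝ), ∀ α : ℝ, 0 < α → α ≤ ᾱ →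
        S (β + α • d) + R (β + α • d) ≤
          S β + R β +
            α * ζ * (fderiv ℝ S β d + κ * (d ⬝ᵥ H.mulVec d) + R (β + d) - R β) :=
  armijo_terminates_general S R β d H κ hS hR hH hκ0 hΔ
end
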